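/- Let φ: ℝⁿ → ℂ be continuous with Im φ(q) ≥ C₁ d(p,q)² for all q in a neighborhood U of p (C₁ > 0), and let a be a bounded measurable function supported in a compact subset K of U with a continuous at p. Then λ^{n/2} ∫ e^{iλφ(q)} a(q) dq remains bounded as λ → +∞; in particular ∫_{d(p,q)≥δ} e^{iλφ} a dq = O(e^{−C₁δ²λ}) for each δ > 0. -/

import Mathlib

open MeasureTheory Real

lemma gauss_integrable {n : ℕ} {b : ℝ} (hb : 0 < b) :
    Integrable (fun v : EuclideanSpace ℝ (Fin n) => rexp (-b * ‖v‖ ^ 2)) := by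
  have h := (GaussianFourier.integrable_cexp_neg_mul_sq_norm_add
    (V := EuclideanSpace ℝ (Fin n)) (b := (b : ℂ)) (by simpa using hb) 0 0).norm
  refine h.congr (Filter.Eventually.of_forall fun v => ?_)
  simp [Complex.norm_exp, ← Complex.ofReal_pow, ← Complex.ofReal_neg,
    ← Complex.ofReal_mul]

lemma gauss_integral {n : ℕ} {b : ℝ} (hb : 0 < b) :
    ∫ v : EuclideanSpace ℝ (Fin n), rexp (-b * ‖v‖ ^ 2) = (π / b) ^ ((n : ℝ) / 2) := by
  rw [GaussianFourier.integral_rexp_neg_mul_sq_norm hb]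
  simp

lemma norm_exp_mul {lam : ℝ} {z w : ℂ} :
    ‖Complex.exp (Complex.I * lam * z) * w‖ = rexp (-(lam * z.im)) * ‖w‖ := by
  rw [norm_mul]
  congr 1
  rw [Complex.norm_exp]
  congr 1
  simp [Complex.mul_re, Complex.mul_im]

/-- if `Im φ(q) ≥ C₁ d(p,q)²` on a neighborhood `U` of `p` and `a` is a bounded
measurable function compactly supported in `U`, then `λ^{n/2} ∫ e^{iλφ} a` stays bounded as
`λ → +∞`, and the contribution away from `p` decays like `e^{-C₁δ²λ}`. -/
theorem stmt13 {n : ℕ} (p : EuclideanSpace ℝ (Fin n))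
    (U : Set (EuclideanSpace ℝ (Fin n))) (hU : IsOpen U) (hpU : p ∈ U)
    (φ : EuclideanSpace ℝ (Fin n) → ℂ) (hφ : Continuous φ)
    (C₁ : ℝ) (hC₁ : 0 < C₁) (hIm : ∀ q ∈ U, C₁ * dist p q ^ 2 ≤ (φ q).im)
    (a : EuclideanSpace ℝ (Fin n) → ℂ) (ha : Measurable a)
    (B : ℝ) (haB : ∀ q, ‖a q‖ ≤ B)
    (hap : ContinuousAt a p)
    (K : Set (EuclideanSpace ℝ (Fin n))) (hK : IsCompact K) (hKU : K ⊆ U)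
    (hsupp : Function.support a ⊆ K) :
    (∃ M : ℝ, ∀ lam : ℝ, 1 ≤ lam →
      ‖((lam ^ ((n : ℝ) / 2) : ℝ) : ℂ)
          * ∫ q, Complex.exp (Complex.I * lam * φ q) * a q‖ ≤ M) ∧
    (∀ δ > (0 : ℝ), ∃ M : ℝ, ∀ lam : ℝ, 1 ≤ lam →
      ‖∫ q in {q | δ ≤ dist p q}, Complex.exp (Complex.I * lam * φ q) * a q‖
        ≤ M * Real.exp (-C₁ * δ ^ 2 * lam)) := by
  have hB : 0 ≤ B := le_trans (norm_nonneg (a p)) (haB p)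
  -- the key pointwise estimate on the exponent, for points of `K`
  have key : ∀ lam : ℝ, 0 < lam → ∀ q ∈ K,
      ‖Complex.exp (Complex.I * lam * φ q) * a q‖
        ≤ B * rexp (-(lam * C₁) * dist p q ^ 2) := by
    intro lam hlam q hq
    rw [norm_exp_mul]
    have h1 : C₁ * dist p q ^ 2 ≤ (φ q).im := hIm q (hKU hq)
    have h2 : rexp (-(lam * (φ q).im)) ≤ rexp (-(lam * C₁) * dist p q ^ 2) := by
      apply Real.exp_le_exp.2
      nlinarith
    calc rexp (-(lam * (φ q).im)) * ‖a q‖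
        ≤ rexp (-(lam * C₁) * dist p q ^ 2) * B :=
          mul_le_mul h2 (haB q) (norm_nonneg _) (Real.exp_nonneg _)
      _ = B * rexp (-(lam * C₁) * dist p q ^ 2) := mul_comm _ _
  constructor
  · -- first part
    refine ⟨B * (π / C₁) ^ ((n : ℝ) / 2), fun lam hlam => ?_⟩
    have hlam0 : 0 < lam := lt_of_lt_of_le one_pos hlam
    have hb : 0 < lam * C₁ := mul_pos hlam0 hC₁
    set g : EuclideanSpace ℝ (Fin n) → ℝ :=
      fun q => B * rexp (-(lam * C₁) * ‖q - p‖ ^ 2) with hg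
    have hgint : Integrable g := by
      exact ((gauss_integrable hb).comp_sub_right p).const_mul B
    have hbound : ∀ q, ‖Complex.exp (Complex.I * lam * φ q) * a q‖ ≤ g q := by
      intro q
      by_cases hq : q ∈ K
      · have := key lam hlam0 q hq
        have hd : dist p q = ‖q - p‖ := by rw [dist_comm, dist_eq_norm]
        simp only [hg]
        rw [← hd]; linarith
      · have haq : a q = 0 := by
          by_contra h
          exact hq (hsupp (Function.mem_support.2 h))
        rw [haq, mul_zero, norm_zero, hg]
        positivity
    have hle : ‖∫ q, Complex.exp (Complex.I * lam * φ q) * a q‖ ≤ ∫ q, g q :=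
      norm_integral_le_of_norm_le hgint (Filter.Eventually.of_forall hbound)
    have hgval : ∫ q, g q = B * (π / (lam * C₁)) ^ ((n : ℝ) / 2) := by
      rw [hg, integral_const_mul]
      have := integral_sub_right_eq_self (μ := volume)
        (fun v : EuclideanSpace ℝ (Fin n) => rexp (-(lam * C₁) * ‖v‖ ^ 2)) p
      rw [this, gauss_integral hb]
    rw [norm_mul, Complex.norm_real, Real.norm_eq_abs,
      abs_of_nonneg (Real.rpow_nonneg hlam0.le _)]
    calc lam ^ ((n : ℝ) / 2) * ‖∫ q, Complex.exp (Complex.I * lam * φ q) * a q‖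
        ≤ lam ^ ((n : ℝ) / 2) * (B * (π / (lam * C₁)) ^ ((n : ℝ) / 2)) := by
          rw [← hgval]
          exact mul_le_mul_of_nonneg_left hle (Real.rpow_nonneg hlam0.le _)
      _ = B * (lam ^ ((n : ℝ) / 2) * (π / (lam * C₁)) ^ ((n : ℝ) / 2)) := by ring
      _ = B * (π / C₁) ^ ((n : ℝ) / 2) := by
          rw [← Real.mul_rpow hlam0.le (by positivity)]
          congr 2
          field_simp
  · -- second part
    intro δ hδ
    refine ⟨B * (volume K).toReal, fun lam hlam => ?_⟩
    have hlam0 : 0 < lam := lt_of_lt_of_le one_pos hlam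
    set S : Set (EuclideanSpace ℝ (Fin n)) := {q | δ ≤ dist p q} with hSdef
    have hS : MeasurableSet S := by
      have : S = (fun q => dist p q) ⁻¹' Set.Ici δ := rfl
      rw [this]
      exact (Continuous.measurable (continuous_const.dist continuous_id)) measurableSet_Ici
    set c : ℝ := B * rexp (-C₁ * δ ^ 2 * lam) with hc
    set g₂ : EuclideanSpace ℝ (Fin n) → ℝ := K.indicator (fun _ => c) with hg₂
    have hg₂int : Integrable g₂ := by
      rw [hg₂]
      exact (integrable_indicator_iff hK.measurableSet).2
        (integrableOn_const hK.measure_lt_top.ne)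
    have hbound : ∀ᵐ q ∂(volume.restrict S),
        ‖Complex.exp (Complex.I * lam * φ q) * a q‖ ≤ g₂ q := by
      rw [ae_restrict_iff' hS]
      refine Filter.Eventually.of_forall fun q hq => ?_
      by_cases hqK : q ∈ K
      · have h1 := key lam hlam0 q hqK
        have hdq : δ ≤ dist p q := hq
        have h2 : rexp (-(lam * C₁) * dist p q ^ 2) ≤ rexp (-C₁ * δ ^ 2 * lam) := by
          apply Real.exp_le_exp.2
          have h3 : δ ^ 2 ≤ dist p q ^ 2 := pow_le_pow_left₀ hδ.le hdq 2
          nlinarith [mul_le_mul_of_nonneg_left h3 (mul_pos hlam0 hC₁).le]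
        have : g₂ q = c := Set.indicator_of_mem hqK _
        rw [this, hc]
        calc ‖Complex.exp (Complex.I * lam * φ q) * a q‖
            ≤ B * rexp (-(lam * C₁) * dist p q ^ 2) := h1
          _ ≤ B * rexp (-C₁ * δ ^ 2 * lam) := mul_le_mul_of_nonneg_left h2 hB
      · have haq : a q = 0 := by
          by_contra h
          exact hqK (hsupp (Function.mem_support.2 h))
        have : g₂ q = 0 := Set.indicator_of_notMem hqK _
        rw [haq, mul_zero, norm_zero, this]
    calc ‖∫ q in S, Complex.exp (Complex.I * lam * φ q) * a q‖
        ≤ ∫ q in S, g₂ q := norm_integral_le_of_norm_le hg₂int.restrict hbound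
      _ ≤ ∫ q, g₂ q := by
          apply setIntegral_le_integral hg₂int
          refine Filter.Eventually.of_forall fun q => ?_
          rw [hg₂]
          apply Set.indicator_nonneg
          intro _ _
          rw [hc]; positivity
      _ = (volume K).toReal • c := integral_indicator_const _ hK.measurableSet
      _ = B * (volume K).toReal * rexp (-C₁ * δ ^ 2 * lam) := by
          rw [smul_eq_mul, hc]; ring
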